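/- arXiv:1712.01519 — 3 statements merged into one kernel-verified Lean document; each statement's English description precedes it below -/
import Mathlib

section
/- Let x be a positive irrational real number, let p be a prime with p < x, assume x < N_p, and set m = ⌊x/p⌋ + 2. Then Σ_{k=1}^{p-1} ( |S_x(kN_p − x, kN_p)| − |S_x(0, x)| ) = − Σ_{n=1}^{m} Σ_{i=1}^{p-1} M_p'(x/(np), x/(np−i)). -/
/-!
Legendre's sieve gives `|S_x(u, v)| = ∑_{d ∣ p N_p} μ(d) · #(ℤ ∩ (u/d, v/d))`. For
`(u, v) = (k N_p - x, k N_p)` a divisor `d ∣ N_p` contributes exactly as for `(0, x)`, because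
`k N_p / d` is an integer. For `d = p b` the shifted endpoint `k N_p / (p b)` has fractional part
`(k (N_p / b) mod p) / p`, and the two counts differ by one exactly when this lies below
`{x / (p b)}`. As `k` runs through `[1, p - 1]` so does `k (N_p / b) mod p`, so the left side is
`-∑_{b ∣ N_p} μ(b) #{j ∈ [1, p - 1] : j < p {x / (p b)}}`.

On the right, an integer `a` lies in `(x/(np), x/(np - i))` exactly when `n = ⌊x/(pa)⌋ + 1` and
`p - i < p {x/(pa)}`; after the substitution `i ↦ p - i` this gives the same sum over `a ≤ ⌈x⌉`
with `p ∤ a`. The squarefree such `a` with no prime factor above `x` are the divisors of `N_p`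
below `x`, and all other terms vanish.
-/

open scoped Classical
open Finset

noncomputable section

/-- Sum of the Möbius function over positive integers `a` in the open interval `(u, v)`
that are *not* divisible by `p`. -/
def Mp' (p : ℕ) (u v : ℝ) : ℤ :=
  ∑ a ∈ (Finset.Icc 1 ⌈v⌉₊).filter
      (fun a : ℕ => u < (a : ℝ) ∧ (a : ℝ) < v ∧ ¬ p ∣ a),
    ArithmeticFunction.moebius a

/-- Sum of the Möbius function over positive integers `a` in the open interval `(u, v)`
that *are* divisible by `p`. -/
def Mp (p : ℕ) (u v : ℝ) : ℤ :=
  ∑ a ∈ (Finset.Icc 1 ⌈v⌉₊).filter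
      (fun a : ℕ => u < (a : ℝ) ∧ (a : ℝ) < v ∧ p ∣ a),
    ArithmeticFunction.moebius a

/-- `Sx y u v` : the set of positive integers in the open interval `(u, v)` all of whose
prime divisors exceed `y`. -/
def Sx (y u v : ℝ) : Set ℕ :=
  {a : ℕ | 0 < a ∧ u < (a : ℝ) ∧ (a : ℝ) < v ∧ ∀ q : ℕ, q.Prime → q ∣ a → y < (q : ℝ)}

/-- `Np x p` : the product of all primes `q < x` with `q ≠ p`. -/
def Np (x : ℝ) (p : ℕ) : ℕ :=
  ∏ q ∈ (Finset.range ⌈x⌉₊).filter (fun q : ℕ => q.Prime ∧ (q : ℝ) < x ∧ q ≠ p), q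

/-- `Aset x j` : squarefree positive integers with exactly `j` prime factors,
all of them less than `x`. -/
def Aset (x : ℝ) (j : ℕ) : Finset ℕ :=
  (Finset.Icc 1 (⌈x⌉₊ ^ j)).filter
    (fun a => Squarefree a ∧ a.primeFactors.card = j ∧ ∀ q ∈ a.primeFactors, (q : ℝ) < x)

/-- `Nint a b` : the number of integers in the open interval `(a, b)`. -/
def Nint (a b : ℝ) : ℕ :=
  (Finset.Ioo ⌊a⌋ ⌈b⌉).card

/-- `Rres a b = (b - a) - N(a, b)`. -/
def Rres (a b : ℝ) : ℝ :=
  (b - a) - Nint a b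

/-- `piR t` : the number of primes `≤ t`. -/
def piR (t : ℝ) : ℕ :=
  Nat.primeCounting ⌊t⌋₊

open scoped ArithmeticFunction.Moebius

lemma Nint_add_intCast (a b : ℝ) (w : ℤ) : Nint (a + w) (b + w) = Nint a b := by
  simp only [Nint, Int.floor_add_intCast, Int.ceil_add_intCast, Int.card_Ioo]
  congr 1
  ring

lemma Nint_neg (a b : ℝ) : Nint (-b) (-a) = Nint a b := by
  simp only [Nint, Int.card_Ioo, Int.floor_neg, Int.ceil_neg]
  congr 1
  ring

lemma Nint_intCast_sub (w : ℤ) (s : ℝ) : Nint (w - s) w = Nint 0 s := by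
  have h := Nint_add_intCast (-s) 0 w
  rw [neg_add_eq_sub, zero_add] at h
  rw [h, ← Nint_neg 0 s, neg_zero]

lemma Nint_eq_floor_sub_floor {a b : ℝ} (hb : b ∉ Set.range Int.cast) (hab : a ≤ b) :
    (Nint a b : ℤ) = ⌊b⌋ - ⌊a⌋ := by
  have := Int.floor_mono hab
  rw [Nint, Int.card_Ioo, (Int.ceil_eq_floor_add_one_iff_notMem b).2 hb,
    Int.toNat_of_nonneg (by omega)]
  ring

lemma floor_sub_floor_sub_floor (t s : ℝ) :
    ⌊t⌋ - ⌊t - s⌋ - ⌊s⌋ = if Int.fract t < Int.fract s then 1 else 0 := by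
  have hts : t - s = Int.fract t - Int.fract s + ((⌊t⌋ - ⌊s⌋ : ℤ) : ℝ) := by
    push_cast
    rw [Int.fract, Int.fract]
    ring
  have := Int.fract_nonneg t
  have := Int.fract_nonneg s
  have := Int.fract_lt_one t
  have := Int.fract_lt_one s
  rw [hts, Int.floor_add_intCast]
  split_ifs with h
  · rw [show ⌊Int.fract t - Int.fract s⌋ = -1 from
      Int.floor_eq_iff.2 (by push_cast; constructor <;> linarith)]
    ring
  · rw [show ⌊Int.fract t - Int.fract s⌋ = 0 from
      Int.floor_eq_iff.2 (by push_cast; constructor <;> linarith)]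
    ring

lemma Nint_sub_sub_Nint_zero {t s : ℝ} (ht : t ∉ Set.range Int.cast)
    (hs : s ∉ Set.range Int.cast) (hs0 : 0 ≤ s) :
    (Nint (t - s) t : ℤ) - Nint 0 s = if Int.fract t < Int.fract s then 1 else 0 := by
  rw [Nint_eq_floor_sub_floor ht (by linarith), Nint_eq_floor_sub_floor hs hs0, Int.floor_zero,
    ← floor_sub_floor_sub_floor]
  ring

lemma Nint_eq_card_Ioo_natFloor_natCeil {u : ℝ} (hu : 0 ≤ u) (v : ℝ) :
    Nint u v = #(Ioo ⌊u⌋₊ ⌈v⌉₊) := by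
  have := Int.floor_nonneg.2 hu
  rw [Nint, Int.card_Ioo, Nat.card_Ioo, ← Int.floor_toNat, ← Int.ceil_toNat]
  omega

lemma card_filter_dvd_Ioo_natFloor_natCeil {d : ℕ} (hd : 0 < d) {u : ℝ} (hu : 0 ≤ u) (v : ℝ) :
    #{n ∈ Ioo ⌊u⌋₊ ⌈v⌉₊ | d ∣ n} = Nint (u / d) (v / d) := by
  have hdR : (0 : ℝ) < d := by exact_mod_cast hd
  have hmul : {n ∈ Ioo ⌊u⌋₊ ⌈v⌉₊ | d ∣ n} = (Ioo ⌊u / d⌋₊ ⌈v / d⌉₊).image (d * ·) := by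
    ext n
    simp only [mem_filter, mem_Ioo, mem_image, Nat.floor_lt hu, Nat.lt_ceil,
      Nat.floor_lt (div_nonneg hu hdR.le), div_lt_iff₀ hdR, lt_div_iff₀ hdR]
    constructor
    · rintro ⟨⟨hu', hv'⟩, m, rfl⟩
      push_cast at hu' hv'
      exact ⟨m, ⟨by linarith, by linarith⟩, rfl⟩
    · rintro ⟨m, ⟨hu', hv'⟩, rfl⟩
      push_cast
      exact ⟨⟨by linarith, by linarith⟩, dvd_mul_right d m⟩
  rw [hmul, card_image_of_injective _ (mul_right_injective₀ hd.ne'),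
    Nint_eq_card_Ioo_natFloor_natCeil (div_nonneg hu hdR.le)]

lemma card_filter_coprime_eq_sum_moebius (T : Finset ℕ) {P : ℕ} (hP : P ≠ 0) :
    (#{n ∈ T | n.Coprime P} : ℤ) = ∑ d ∈ P.divisors, μ d * #{n ∈ T | d ∣ n} := by
  have hcoprime (n : ℕ) :
      (if n.Coprime P then 1 else 0 : ℤ) = ∑ d ∈ P.divisors, if d ∣ n then μ d else 0 := by
    have hgcd : P.divisors.filter (· ∣ n) = (n.gcd P).divisors := by
      ext d
      simp [Nat.dvd_gcd_iff, hP, and_comm]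
    rw [← sum_filter, hgcd, ← ArithmeticFunction.coe_mul_zeta_apply,
      ArithmeticFunction.moebius_mul_coe_zeta, ArithmeticFunction.one_apply]
  rw [natCast_card_filter, sum_congr rfl fun n _ => hcoprime n, sum_comm]
  refine sum_congr rfl fun d _ => ?_
  rw [← sum_filter, sum_const, nsmul_eq_mul, mul_comm]

lemma Sx_eq_filter_coprime {x : ℝ} (hx : Irrational x) {P : ℕ}
    (hP : ∀ q : ℕ, q.Prime → (q ∣ P ↔ (q : ℝ) < x)) {u : ℝ} (hu : 0 ≤ u) (v : ℝ) :
    Sx x u v = ↑{n ∈ Ioo ⌊u⌋₊ ⌈v⌉₊ | n.Coprime P} := by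
  ext n
  simp only [Sx, Set.mem_ofPred_eq, coe_filter, mem_Ioo, Nat.floor_lt hu, Nat.lt_ceil]
  have hcoprime : n.Coprime P ↔ ∀ q : ℕ, q.Prime → q ∣ n → x < q := by
    refine ⟨fun h q hq hqn => ?_, fun h => Nat.coprime_of_dvd fun q hq hqn hqP => ?_⟩
    · refine lt_of_le_of_ne (not_lt.1 fun hqx => ?_) fun hxq => hx.ne_nat q hxq
      exact hq.one_lt.ne' (Nat.dvd_one.1 (h ▸ Nat.dvd_gcd hqn ((hP q hq).2 hqx)))
    · exact (h q hq hqn).not_gt ((hP q hq).1 hqP)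
  rw [hcoprime]
  constructor
  · rintro ⟨-, hun, hnv, h⟩
    exact ⟨⟨hun, hnv⟩, h⟩
  · rintro ⟨⟨hun, hnv⟩, h⟩
    exact ⟨Nat.cast_pos.1 (hu.trans_lt hun), hun, hnv, h⟩

lemma ncard_Sx_eq_sum_moebius {x : ℝ} (hx : Irrational x) {P : ℕ} (hP0 : P ≠ 0)
    (hP : ∀ q : ℕ, q.Prime → (q ∣ P ↔ (q : ℝ) < x)) {u : ℝ} (hu : 0 ≤ u) (v : ℝ) :
    ((Sx x u v).ncard : ℤ) = ∑ d ∈ P.divisors, μ d * Nint (u / d) (v / d) := by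
  rw [Sx_eq_filter_coprime hx hP hu, Set.ncard_coe_finset,
    card_filter_coprime_eq_sum_moebius _ hP0]
  refine sum_congr rfl fun d hd => ?_
  rw [card_filter_dvd_Ioo_natFloor_natCeil (Nat.pos_of_mem_divisors hd) hu]

lemma prime_dvd_Np_iff {x : ℝ} {p q : ℕ} (hq : q.Prime) :
    q ∣ Np x p ↔ (q : ℝ) < x ∧ q ≠ p := by
  rw [Np, Prime.dvd_finsetProd_iff hq.prime]
  constructor
  · rintro ⟨r, hr, hqr⟩
    obtain ⟨-, hr, hrx, hrp⟩ := mem_filter.1 hr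
    rw [(Nat.prime_dvd_prime_iff_eq hq hr).1 hqr]
    exact ⟨hrx, hrp⟩
  · rintro ⟨hqx, hqp⟩
    exact ⟨q, mem_filter.2 ⟨mem_range.2 (Nat.lt_ceil.2 hqx), hq, hqx, hqp⟩, dvd_rfl⟩

lemma Np_ne_zero (x : ℝ) (p : ℕ) : Np x p ≠ 0 :=
  prod_ne_zero_iff.2 fun _ hq => (mem_filter.1 hq).2.1.ne_zero

lemma prime_dvd_mul_Np_iff {x : ℝ} {p q : ℕ} (hp : p.Prime) (hpx : (p : ℝ) < x)
    (hq : q.Prime) : q ∣ p * Np x p ↔ (q : ℝ) < x := by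
  rw [hq.dvd_mul, Nat.prime_dvd_prime_iff_eq hq hp, prime_dvd_Np_iff hq]
  constructor
  · rintro (rfl | ⟨hqx, -⟩) <;> assumption
  · intro hqx
    by_cases hqp : q = p
    · exact Or.inl hqp
    · exact Or.inr ⟨hqx, hqp⟩

lemma notMem_range_intCast_div_prime {p c : ℕ} (hp : p.Prime) (hc : ¬ p ∣ c) :
    ((c : ℝ) / p) ∉ Set.range Int.cast := by
  rw [← Int.fract_ne_zero_iff, Int.fract_div_natCast_eq_div_natCast_mod]
  have : c % p ≠ 0 := fun h => hc (Nat.dvd_of_mod_eq_zero h)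
  have := hp.pos
  positivity

lemma Nint_sub_sub_Nint_zero_of_div_prime {p c : ℕ} (hp : p.Prime) (hc : ¬ p ∣ c) {s : ℝ}
    (hs : Irrational s) (hs0 : 0 ≤ s) :
    (Nint ((c : ℝ) / p - s) (c / p) : ℤ) - Nint 0 s =
      if ((c % p : ℕ) : ℝ) < p * Int.fract s then 1 else 0 := by
  have hpR : (0 : ℝ) < p := by exact_mod_cast hp.pos
  rw [Nint_sub_sub_Nint_zero (notMem_range_intCast_div_prime hp hc)
    (fun ⟨m, hm⟩ => hs.ne_int m hm.symm) hs0, Int.fract_div_natCast_eq_div_natCast_mod]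
  exact if_congr (div_lt_iff₀' hpR) rfl rfl

lemma sum_Icc_mul_mod_prime {M : Type*} [AddCommMonoid M] {p c : ℕ} (hp : p.Prime)
    (hc : ¬ p ∣ c) (f : ℕ → M) :
    ∑ k ∈ Icc 1 (p - 1), f (k * c % p) = ∑ k ∈ Icc 1 (p - 1), f k := by
  have hmaps : ∀ k ∈ Icc 1 (p - 1), k * c % p ∈ Icc 1 (p - 1) := by
    intro k hk
    obtain ⟨hk1, hkp⟩ := mem_Icc.1 hk
    have hpk : ¬ p ∣ k := fun h => by
      have := Nat.le_of_dvd hk1 h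
      omega
    have hne : k * c % p ≠ 0 := fun h =>
      (hp.dvd_mul.1 (Nat.dvd_of_mod_eq_zero h)).elim hpk hc
    have := Nat.mod_lt (k * c) hp.pos
    rw [mem_Icc]
    omega
  have hinj : Set.InjOn (fun k => k * c % p) (Icc 1 (p - 1)) := by
    intro k hk l hl hkl
    have hmod : k ≡ l [MOD p] :=
      Nat.ModEq.cancel_right_of_coprime (hp.coprime_iff_not_dvd.2 hc) hkl
    rw [coe_Icc, Set.mem_Icc] at hk hl
    exact Nat.ModEq.eq_of_lt_of_lt hmod (by omega) (by omega)
  have himage : (Icc 1 (p - 1)).image (fun k => k * c % p) = Icc 1 (p - 1) :=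
    eq_of_subset_of_card_le (image_subset_iff.2 hmaps) (card_image_of_injOn hinj).ge
  rw [← sum_image hinj, himage]

def fracCount (p : ℕ) (s : ℝ) : ℕ :=
  #{j ∈ Icc 1 (p - 1) | ((j : ℕ) : ℝ) < p * Int.fract s}

lemma sum_divisors_prime_mul {M : Type*} [AddCommMonoid M] {p N : ℕ} (hp : p.Prime)
    (hpN : ¬ p ∣ N) (g : ℕ → M) :
    ∑ d ∈ (p * N).divisors, g d = ∑ d ∈ N.divisors, g d + ∑ d ∈ N.divisors, g (p * d) := by
  rw [Nat.Coprime.divisors_mul (hp.coprime_iff_not_dvd.2 hpN), sum_map]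
  refine (sum_attach (p.divisors ×ˢ N.divisors) (fun q => g (q.1 * q.2))).trans ?_
  rw [sum_product, hp.divisors, sum_pair hp.one_lt.ne]
  simp only [one_mul]

lemma moebius_prime_mul {p b : ℕ} (hp : p.Prime) (hpb : ¬ p ∣ b) : μ (p * b) = -μ b := by
  rw [ArithmeticFunction.isMultiplicative_moebius.map_mul_of_coprime
    (hp.coprime_iff_not_dvd.2 hpb), ArithmeticFunction.moebius_apply_prime hp, neg_one_mul]

lemma natCast_mul_div_of_dvd {d N : ℕ} (hd : d ∣ N) (hd0 : d ≠ 0) (k : ℕ) :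
    (k * N : ℝ) / d = ((k * (N / d) : ℕ) : ℝ) := by
  rw [Nat.cast_mul, Nat.cast_div hd (by exact_mod_cast hd0), mul_div_assoc]

lemma ncard_Sx_sub_ncard_Sx {x : ℝ} (hxirr : Irrational x) {p : ℕ} (hp : p.Prime)
    (hpx : (p : ℝ) < x) (hxN : x < Np x p) {k : ℕ} (hk : k ∈ Icc 1 (p - 1)) :
    ((Sx x (k * Np x p - x) (k * Np x p)).ncard : ℤ) - (Sx x 0 x).ncard =
      -∑ b ∈ (Np x p).divisors, μ b *
        if ((k * (Np x p / b) % p : ℕ) : ℝ) < p * Int.fract (x / (p * b)) then 1 else 0 := by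
  set N := Np x p
  obtain ⟨hk1, hkp⟩ := mem_Icc.1 hk
  have hx : 0 < x := (Nat.cast_nonneg p).trans_lt hpx
  have hpN : ¬ p ∣ N := fun h => ((prime_dvd_Np_iff hp).1 h).2 rfl
  have hP0 : p * N ≠ 0 := mul_ne_zero hp.ne_zero (Np_ne_zero x p)
  have hu : 0 ≤ (k : ℝ) * N - x := by
    have : (1 : ℝ) ≤ k := by exact_mod_cast hk1
    nlinarith
  rw [ncard_Sx_eq_sum_moebius hxirr hP0 (fun _ => prime_dvd_mul_Np_iff hp hpx) hu,
    ncard_Sx_eq_sum_moebius hxirr hP0 (fun _ => prime_dvd_mul_Np_iff hp hpx) le_rfl,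
    ← sum_sub_distrib, sum_divisors_prime_mul hp hpN, ← sum_neg_distrib]
  have hdvd_N_terms : ∀ d ∈ N.divisors,
      μ d * (Nint ((k * N - x) / d) (k * N / d) : ℤ) - μ d * Nint (0 / d) (x / d) = 0 := by
    intro d hd
    have h := Nint_intCast_sub ((k * (N / d) : ℕ) : ℤ) (x / d)
    rw [Int.cast_natCast] at h
    rw [sub_div, natCast_mul_div_of_dvd (Nat.dvd_of_mem_divisors hd)
      (Nat.pos_of_mem_divisors hd).ne', zero_div, h, sub_self]
  rw [sum_eq_zero hdvd_N_terms, zero_add]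
  refine sum_congr rfl fun b hb => ?_
  have hb0 : b ≠ 0 := (Nat.pos_of_mem_divisors hb).ne'
  have hbN : b ∣ N := Nat.dvd_of_mem_divisors hb
  have hpkc : ¬ p ∣ k * (N / b) := by
    rw [hp.dvd_mul]
    rintro (h | h)
    · have := Nat.le_of_dvd hk1 h
      omega
    · exact hpN (h.trans (Nat.div_dvd_of_dvd hbN))
  have hpb : ((p * b : ℕ) : ℝ) = p * b := Nat.cast_mul p b
  have hkN : (k * N : ℝ) / (p * b : ℕ) = ((k * (N / b) : ℕ) : ℝ) / p := by
    rw [hpb, mul_comm (p : ℝ), ← div_div, natCast_mul_div_of_dvd hbN hb0]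
  rw [← mul_sub, sub_div, hkN, zero_div, hpb,
    Nint_sub_sub_Nint_zero_of_div_prime hp hpkc
      (by simpa [hpb] using hxirr.div_natCast (mul_ne_zero hp.ne_zero hb0)) (by positivity),
    moebius_prime_mul hp fun h => hpN (h.trans hbN), neg_mul]

lemma sum_ncard_Sx_sub_ncard_Sx {x : ℝ} (hxirr : Irrational x) {p : ℕ} (hp : p.Prime)
    (hpx : (p : ℝ) < x) (hxN : x < Np x p) :
    ∑ k ∈ Icc 1 (p - 1), (((Sx x (k * Np x p - x) (k * Np x p)).ncard : ℤ) - (Sx x 0 x).ncard) =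
      -∑ b ∈ (Np x p).divisors, μ b * fracCount p (x / (p * b)) := by
  rw [sum_congr rfl fun k hk => ncard_Sx_sub_ncard_Sx hxirr hp hpx hxN hk, sum_neg_distrib,
    sum_comm]
  congr 1
  refine sum_congr rfl fun b hb => ?_
  have hpc : ¬ p ∣ Np x p / b := fun h =>
    ((prime_dvd_Np_iff hp).1 (h.trans (Nat.div_dvd_of_dvd (Nat.dvd_of_mem_divisors hb)))).2 rfl
  rw [← mul_sum, fracCount, natCast_card_filter,
    sum_Icc_mul_mod_prime hp hpc fun j => if (j : ℝ) < p * Int.fract (x / (p * b)) then 1 else 0]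

lemma Mp'_eq_sum_ite (p : ℕ) {u v w : ℝ} (hvw : v ≤ w) :
    Mp' p u v = ∑ a ∈ Icc 1 ⌈w⌉₊ with ¬ p ∣ a, if u < a ∧ (a : ℝ) < v then μ a else 0 := by
  rw [Mp', ← sum_filter, filter_filter]
  congr 1
  ext a
  simp only [mem_filter, mem_Icc]
  constructor
  · rintro ⟨⟨ha1, -⟩, hua, hav, hpa⟩
    exact ⟨⟨ha1, (Nat.lt_ceil.2 (hav.trans_le hvw)).le⟩, hpa, hua, hav⟩
  · rintro ⟨⟨ha1, -⟩, hpa, hua, hav⟩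
    exact ⟨⟨ha1, (Nat.lt_ceil.2 hav).le⟩, hua, hav, hpa⟩

lemma mul_sub_lt_and_lt_mul_iff {p s i : ℝ} (hp : 0 < p) (hs : 0 ≤ s) (hi : i ≤ p) (n : ℕ) :
    (n * p - i < p * s ∧ p * s < n * p) ↔ n = ⌊s⌋₊ + 1 ∧ p - i < p * Int.fract s := by
  rw [Int.fract, ← natCast_floor_eq_intCast_floor hs]
  have hfloor := Nat.lt_floor_add_one s
  constructor
  · rintro ⟨hlo, hhi⟩
    have hsn : s < n := lt_of_mul_lt_mul_left (by linarith) hp.le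
    have hns : (n : ℝ) < ⌊s⌋₊ + 2 := by nlinarith
    have hn : n = ⌊s⌋₊ + 1 := by
      have := (Nat.floor_lt hs).2 hsn
      have : n < ⌊s⌋₊ + 2 := by exact_mod_cast hns
      omega
    subst hn
    push_cast at hlo ⊢
    exact ⟨rfl, by linarith⟩
  · rintro ⟨rfl, h⟩
    push_cast at h ⊢
    constructor <;> nlinarith

lemma sum_Icc_sub {M : Type*} [AddCommMonoid M] (p : ℕ) (f : ℕ → M) :
    ∑ i ∈ Icc 1 (p - 1), f (p - i) = ∑ i ∈ Icc 1 (p - 1), f i := by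
  refine sum_nbij' (p - ·) (p - ·) ?_ ?_ ?_ ?_ fun _ _ => rfl <;>
    intro i hi <;> simp only [mem_Icc] at * <;> omega

lemma sum_sum_moebius_window {x : ℝ} (hx : 0 < x) {p : ℕ} (hp : p.Prime) {m a : ℕ} (ha : 1 ≤ a)
    (hm : ⌊x / p⌋₊ + 1 ≤ m) :
    ∑ n ∈ Icc 1 m, ∑ i ∈ Icc 1 (p - 1),
        (if x / (n * p) < a ∧ (a : ℝ) < x / (n * p - i) then μ a else 0) =
      μ a * fracCount p (x / (p * a)) := by
  set s := x / (p * a)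
  have hpR : (0 : ℝ) < p := by exact_mod_cast hp.pos
  have haR : (0 : ℝ) < a := by exact_mod_cast ha
  have hs : 0 ≤ s := by positivity
  have hxa : x / a = p * s := by
    simp only [s]
    field_simp
  have hwindow : ∀ n ∈ Icc 1 m, ∀ i ∈ Icc 1 (p - 1),
      (x / (n * p) < a ∧ (a : ℝ) < x / (n * p - i)) ↔
        n = ⌊s⌋₊ + 1 ∧ ((p - i : ℕ) : ℝ) < p * Int.fract s := by
    intro n hn i hi
    obtain ⟨hn1, -⟩ := mem_Icc.1 hn
    obtain ⟨hi1, hip⟩ := mem_Icc.1 hi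
    have hip' : (i : ℝ) + 1 ≤ p := by exact_mod_cast (by omega : i + 1 ≤ p)
    have hn1' : (1 : ℝ) ≤ n := by exact_mod_cast hn1
    have hnpi : 0 < (n : ℝ) * p - i := by nlinarith
    rw [Nat.cast_sub (by omega), ← mul_sub_lt_and_lt_mul_iff hpR hs (by linarith) n, ← hxa,
      div_lt_iff₀ (by positivity), lt_div_iff₀ hnpi, lt_div_iff₀ haR, div_lt_iff₀ haR]
    constructor <;> rintro ⟨h1, h2⟩ <;> constructor <;> linarith
  have hmem : ⌊s⌋₊ + 1 ∈ Icc 1 m := by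
    have : s ≤ x / p := div_le_div_of_nonneg_left hx.le hpR (by
      have : (1 : ℝ) ≤ a := by exact_mod_cast ha
      nlinarith)
    have := Nat.floor_mono this
    exact mem_Icc.2 ⟨by omega, by omega⟩
  rw [sum_congr rfl fun n hn => sum_congr rfl fun i hi => if_congr (hwindow n hn i hi) rfl rfl]
  simp only [ite_and]
  rw [sum_comm]
  simp only [sum_ite_eq', if_pos hmem]
  rw [sum_Icc_sub p fun j => if ((j : ℕ) : ℝ) < p * Int.fract s then μ a else 0,
    ← sum_filter, sum_const, nsmul_eq_mul, mul_comm, fracCount]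

lemma sum_sum_Mp' {x : ℝ} (hx : 0 < x) {p : ℕ} (hp : p.Prime) :
    ∑ n ∈ Icc 1 (⌊x / p⌋₊ + 2), ∑ i ∈ Icc 1 (p - 1), Mp' p (x / (n * p)) (x / (n * p - i)) =
      ∑ a ∈ Icc 1 ⌈x⌉₊ with ¬ p ∣ a, μ a * fracCount p (x / (p * a)) := by
  have hle : ∀ n ∈ Icc 1 (⌊x / p⌋₊ + 2), ∀ i ∈ Icc 1 (p - 1), x / (n * p - i) ≤ x := by
    intro n hn i hi
    obtain ⟨hi1, hip⟩ := mem_Icc.1 hi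
    have hn1 : (1 : ℝ) ≤ n := by exact_mod_cast (mem_Icc.1 hn).1
    have hip' : (i : ℝ) + 1 ≤ p := by exact_mod_cast (by omega : i + 1 ≤ p)
    exact div_le_self hx.le (by nlinarith)
  calc _ = ∑ n ∈ Icc 1 (⌊x / p⌋₊ + 2), ∑ a ∈ Icc 1 ⌈x⌉₊ with ¬ p ∣ a, ∑ i ∈ Icc 1 (p - 1),
          (if x / (n * p) < a ∧ (a : ℝ) < x / (n * p - i) then μ a else 0) := by
        refine sum_congr rfl fun n hn => ?_
        rw [sum_congr rfl fun i hi => Mp'_eq_sum_ite p (hle n hn i hi), sum_comm]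
    _ = _ := by
        rw [sum_comm]
        exact sum_congr rfl fun a ha =>
          sum_sum_moebius_window hx hp (mem_Icc.1 (mem_filter.1 ha).1).1 (by omega)

lemma fracCount_eq_zero_of_lt {x : ℝ} (hx : 0 ≤ x) (p : ℕ) {a : ℕ} (ha : x < a) :
    fracCount p (x / (p * a)) = 0 := by
  rw [fracCount, card_eq_zero, filter_eq_empty_iff]
  intro j hj
  have hj1 : (1 : ℝ) ≤ j := by exact_mod_cast (mem_Icc.1 hj).1
  have haR : (0 : ℝ) < a := hx.trans_lt ha
  rcases p.eq_zero_or_pos with rfl | hp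
  · simp only [Nat.cast_zero, zero_mul, not_lt]
    linarith
  · have hp1 : (1 : ℝ) ≤ p := by exact_mod_cast hp
    have hlt : x / (p * a) < 1 := by
      rw [div_lt_one (by positivity)]
      nlinarith
    have hpxa : (p : ℝ) * (x / (p * a)) = x / a := by field_simp
    rw [Int.fract_eq_self.2 ⟨by positivity, hlt⟩, hpxa, not_lt]
    exact ((div_lt_one haR).2 ha).le.trans hj1

lemma sum_divisors_Np_eq_sum_Icc {x : ℝ} (hxirr : Irrational x) (hx : 0 < x) {p : ℕ}
    (hp : p.Prime) :
    ∑ b ∈ (Np x p).divisors, μ b * fracCount p (x / (p * b)) =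
      ∑ a ∈ Icc 1 ⌈x⌉₊ with ¬ p ∣ a, μ a * fracCount p (x / (p * a)) := by
  have hN0 := Np_ne_zero x p
  refine sum_congr_of_eq_on_inter (fun b hb hbA => ?_) (fun a ha haN => ?_) fun _ _ _ => rfl
  · have hpb : ¬ p ∣ b := fun h =>
      ((prime_dvd_Np_iff hp).1 (h.trans (Nat.dvd_of_mem_divisors hb))).2 rfl
    have hxb : x < b := by
      by_contra! hbx
      exact hbA (mem_filter.2
        ⟨mem_Icc.2 ⟨Nat.pos_of_mem_divisors hb, Nat.cast_le.1 (hbx.trans (Nat.le_ceil x))⟩, hpb⟩)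
    rw [fracCount_eq_zero_of_lt hx.le p hxb, Nat.cast_zero, mul_zero]
  · obtain ⟨ha1, hpa⟩ := mem_filter.1 ha
    by_cases hsq : Squarefree a
    · obtain ⟨q, hq, hxq⟩ : ∃ q ∈ a.primeFactors, x < q := by
        by_contra! hsmall
        refine haN (Nat.mem_divisors.2 ⟨?_, hN0⟩)
        rw [← Nat.prod_primeFactors_of_squarefree hsq, Nat.prod_primeFactors_dvd_iff hN0]
        intro q hq
        have hqp := Nat.prime_of_mem_primeFactors hq
        refine hqp.mem_primeFactors ((prime_dvd_Np_iff hqp).2 ⟨?_, ?_⟩) hN0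
        · exact (hsmall q hq).lt_of_ne (hxirr.ne_nat q).symm
        · rintro rfl
          exact hpa (Nat.dvd_of_mem_primeFactors hq)
      have hxa : x < a := hxq.trans_le (by exact_mod_cast Nat.le_of_mem_primeFactors hq)
      rw [fracCount_eq_zero_of_lt hx.le p hxa, Nat.cast_zero, mul_zero]
    · rw [ArithmeticFunction.moebius_eq_zero_of_not_squarefree hsq, zero_mul]

theorem stmt_1_general (x : ℝ) (hxirr : Irrational x)
    (p : ℕ) (hp : p.Prime) (hpx : (p : ℝ) < x) (hxN : x < Np x p) :
    ∑ k ∈ Finset.Icc 1 (p - 1),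
        (((Sx x ((k : ℝ) * Np x p - x) ((k : ℝ) * Np x p)).ncard : ℤ)
          - ((Sx x 0 x).ncard : ℤ))
      = - ∑ n ∈ Finset.Icc 1 (⌊x / p⌋₊ + 2), ∑ i ∈ Finset.Icc 1 (p - 1),
          Mp' p (x / ((n : ℝ) * p)) (x / ((n : ℝ) * p - i)) := by
  have hx : 0 < x := (Nat.cast_nonneg p).trans_lt hpx
  rw [sum_ncard_Sx_sub_ncard_Sx hxirr hp hpx hxN, sum_divisors_Np_eq_sum_Icc hxirr hx hp,
    sum_sum_Mp' hx hp]

theorem stmt_1 (x : ℝ) (hx : 0 < x) (hxirr : Irrational x)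
    (p : ℕ) (hp : p.Prime) (hpx : (p : ℝ) < x) (hxN : x < Np x p) :
    ∑ k ∈ Finset.Icc 1 (p - 1),
        (((Sx x ((k : ℝ) * Np x p - x) ((k : ℝ) * Np x p)).ncard : ℤ)
          - ((Sx x 0 x).ncard : ℤ))
      = - ∑ n ∈ Finset.Icc 1 (⌊x / p⌋₊ + 2), ∑ i ∈ Finset.Icc 1 (p - 1),
          Mp' p (x / ((n : ℝ) * p)) (x / ((n : ℝ) * p - i)) :=
  stmt_1_general x hxirr p hp hpx hxN

end
end

section
/- Let x be a positive irrational real number, let p be a prime with p < x, let k be an integer with 1 ≤ k ≤ p−1, and let a be a squarefree positive integer all of whose prime factors are less than x. Then R(0, x/a) − R((kN_p − x)/a, kN_p/a) equals 1 if p divides a and {x/a} > {kN_p/a}, and equals 0 otherwise (i.e., if p divides a but {x/a} ≤ {kN_p/a}, or if p does not divide a). -/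
open scoped Classical
open Finset

noncomputable section

/-!
Write `L = x / a` and `v = k N_p / a`. Counting integers in an open interval by a ceiling and
a floor gives `R(0, L) - R(v - L, v) = ⌈v⌉ - ⌈L⌉ - ⌊v - L⌋`, and after the reflection `t ↦ -t`
this is `1` exactly when `{-L} < {-v}`. As `x` is irrational, `L` is not an integer. If `p ∤ a`
then `a ∣ N_p`, so `v` is an integer and the condition fails; if `p ∣ a` then `a ∤ k N_p`, so `v`
is not an integer either and the condition reads `{v} < {L}`.
-/

lemma Nint_eq_ceil_sub_floor {u v : ℝ} (huv : u < v) : (Nint u v : ℝ) = ⌈v⌉ - ⌊u⌋ - 1 := by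
  have h : ⌊u⌋ < ⌈v⌉ := Int.cast_lt.mp ((Int.floor_le u).trans_lt (huv.trans_le (Int.le_ceil v)))
  rw [Nint, Int.card_Ioo]
  exact_mod_cast Int.toNat_of_nonneg (by omega)

lemma Rres_eq {u v : ℝ} (huv : u < v) : Rres u v = (v - u) - (⌈v⌉ - ⌊u⌋ - 1) := by
  rw [Rres, Nint_eq_ceil_sub_floor huv]

lemma Int.floor_sub_floor_sub_floor_sub {R : Type*} [CommRing R] [LinearOrder R]
    [IsStrictOrderedRing R] [FloorRing R] (v w : R) :
    ⌊v⌋ - ⌊w⌋ - ⌊v - w⌋ = if Int.fract v < Int.fract w then 1 else 0 := by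
  have hv := Int.floor_add_fract v
  have hw := Int.floor_add_fract w
  have := Int.fract_nonneg v
  have := Int.fract_nonneg w
  have := Int.fract_lt_one v
  have := Int.fract_lt_one w
  split_ifs with h
  · have : ⌊v - w⌋ = ⌊v⌋ - ⌊w⌋ - 1 := by
      rw [Int.floor_eq_iff]; push_cast; constructor <;> linarith
    omega
  · have : ⌊v - w⌋ = ⌊v⌋ - ⌊w⌋ := by
      rw [Int.floor_eq_iff]; push_cast; constructor <;> linarith
    omega

lemma Rres_zero_sub_Rres_sub {L : ℝ} (hL : 0 < L) (v : ℝ) :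
    Rres 0 L - Rres (v - L) v = if Int.fract (-L) < Int.fract (-v) then 1 else 0 := by
  have key := Int.floor_sub_floor_sub_floor_sub (-L) (-v)
  rw [Int.floor_neg, Int.floor_neg, neg_sub_neg, neg_sub_neg] at key
  rw [Rres_eq hL, Rres_eq (sub_lt_self v hL), Int.floor_zero, Int.cast_zero]
  have := congrArg (fun n : ℤ => (n : ℝ)) key
  push_cast at this
  split_ifs at this ⊢ <;> linarith

lemma Int.fract_natCast_div_eq_zero_iff {k : Type*} [Field k] [LinearOrder k]
    [IsStrictOrderedRing k] [FloorRing k] {m n : ℕ} (hn : n ≠ 0) :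
    Int.fract ((m : k) / n) = 0 ↔ n ∣ m := by
  rw [Int.fract_div_natCast_eq_div_natCast_mod, div_eq_zero_iff, Nat.cast_eq_zero,
    Nat.cast_eq_zero, or_iff_left hn, Nat.dvd_iff_mod_eq_zero]

lemma not_dvd_Np {p : ℕ} (hp : p.Prime) (x : ℝ) : ¬ p ∣ Np x p := by
  rw [Np, hp.prime.dvd_finsetProd_iff]
  rintro ⟨q, hq, hpq⟩
  simp only [Finset.mem_filter] at hq
  exact hq.2.2.2 ((Nat.prime_dvd_prime_iff_eq hp hq.2.1).mp hpq).symm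

lemma dvd_Np {x : ℝ} {p a : ℕ} (hsf : Squarefree a) (hfac : ∀ q ∈ a.primeFactors, (q : ℝ) < x)
    (hpa : ¬ p ∣ a) : a ∣ Np x p := by
  rw [← Nat.prod_primeFactors_of_squarefree hsf, Np]
  refine Finset.prod_dvd_prod_of_subset _ _ _ fun q hq => ?_
  have hqx := hfac q hq
  refine Finset.mem_filter.mpr ⟨?_, Nat.prime_of_mem_primeFactors hq, hqx, ?_⟩
  · exact Finset.mem_range.mpr (Nat.cast_lt.mp (hqx.trans_le (Nat.le_ceil x)))
  · rintro rfl
    exact hpa (Nat.dvd_of_mem_primeFactors hq)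

theorem stmt_11_general (x : ℝ) (hx : 0 < x) (hxirr : Irrational x)
    (p : ℕ) (hp : p.Prime)
    (k : ℕ) (hk1 : 1 ≤ k) (hk2 : k ≤ p - 1)
    (a : ℕ) (ha : 0 < a) (hsf : Squarefree a)
    (hfac : ∀ q ∈ a.primeFactors, (q : ℝ) < x) :
    Rres 0 (x / a) - Rres (((k : ℝ) * Np x p - x) / a) (((k : ℝ) * Np x p) / a)
      = if p ∣ a ∧ Int.fract (((k : ℝ) * Np x p) / a) < Int.fract (x / a)
        then 1 else 0 := by
  have hL : Int.fract (x / a) ≠ 0 := by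
    rw [Ne, Int.fract_eq_zero_iff]
    rintro ⟨n, hn⟩
    exact (hxirr.div_natCast ha.ne').ne_int n hn.symm
  have hv : ((k : ℝ) * Np x p) / a = ((k * Np x p : ℕ) : ℝ) / a := by push_cast; rfl
  rw [sub_div, Rres_zero_sub_Rres_sub (by positivity), Int.fract_neg hL, hv]
  by_cases hpa : p ∣ a
  · have hpk : ¬ p ∣ k := fun h => by have := Nat.le_of_dvd hk1 h; omega
    have hvnz : Int.fract (((k * Np x p : ℕ) : ℝ) / a) ≠ 0 := by
      rw [Ne, Int.fract_natCast_div_eq_zero_iff ha.ne']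
      exact fun h => (hp.prime.not_dvd_mul hpk (not_dvd_Np hp x)) (hpa.trans h)
    simp only [Int.fract_neg hvnz, sub_lt_sub_iff_left, hpa, true_and]
  · have hvz : Int.fract (((k * Np x p : ℕ) : ℝ) / a) = 0 :=
      (Int.fract_natCast_div_eq_zero_iff ha.ne').mpr
        ((dvd_Np hsf hfac hpa).trans (dvd_mul_left _ _))
    rw [Int.fract_neg_eq_zero.mpr hvz, if_neg (by linarith [Int.fract_lt_one (x / a)]),
      if_neg fun h => hpa h.1]

theorem stmt_11 (x : ℝ) (hx : 0 < x) (hxirr : Irrational x)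
    (p : ℕ) (hp : p.Prime) (hpx : (p : ℝ) < x)
    (k : ℕ) (hk1 : 1 ≤ k) (hk2 : k ≤ p - 1)
    (a : ℕ) (ha : 0 < a) (hsf : Squarefree a)
    (hfac : ∀ q ∈ a.primeFactors, (q : ℝ) < x) :
    Rres 0 (x / a) - Rres (((k : ℝ) * Np x p - x) / a) (((k : ℝ) * Np x p) / a)
      = if p ∣ a ∧ Int.fract (((k : ℝ) * Np x p) / a) < Int.fract (x / a)
        then 1 else 0 :=
  stmt_11_general x hx hxirr p hp k hk1 hk2 a ha hsf hfac
end
end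

section
/- Let x be a positive irrational real number, let p be a prime with p < x, and let a be a squarefree positive integer divisible by p all of whose prime factors are less than x. Then the map k ↦ {kN_p/a} is a bijection from {1, 2, …, p−1} onto {1/p, 2/p, …, (p−1)/p}; in particular, for each k with 1 ≤ k ≤ p−1 there is an integer i with 1 ≤ i ≤ p−1 such that {kN_p/a} = i/p, and distinct values of k yield distinct values of {kN_p/a}. -/
open scoped Classical
open Finset

noncomputable section

theorem stmt_13 (x : ℝ) (hx : 0 < x) (hxirr : Irrational x)
    (p : ℕ) (hp : p.Prime) (hpx : (p : ℝ) < x)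
    (a : ℕ) (ha : 0 < a) (hsf : Squarefree a) (hpa : p ∣ a)
    (hfac : ∀ q ∈ a.primeFactors, (q : ℝ) < x) :
    Set.BijOn (fun k : ℕ => Int.fract (((k : ℝ) * Np x p) / a))
        {k : ℕ | 1 ≤ k ∧ k ≤ p - 1}
        {t : ℝ | ∃ i : ℕ, 1 ≤ i ∧ i ≤ p - 1 ∧ t = (i : ℝ) / p}
      ∧ (∀ k : ℕ, 1 ≤ k → k ≤ p - 1 →
          ∃ i : ℕ, 1 ≤ i ∧ i ≤ p - 1 ∧
            Int.fract (((k : ℝ) * Np x p) / a) = (i : ℝ) / p)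
      ∧ (∀ k₁ k₂ : ℕ, 1 ≤ k₁ → k₁ ≤ p - 1 → 1 ≤ k₂ → k₂ ≤ p - 1 → k₁ ≠ k₂ →
          Int.fract (((k₁ : ℝ) * Np x p) / a)
            ≠ Int.fract (((k₂ : ℝ) * Np x p) / a)) := by
  haveI : Fact p.Prime := ⟨hp⟩
  have hp0 : 0 < p := hp.pos
  set N := Np x p with hN
  set m := a / p with hm
  have ham : a = p * m := (Nat.mul_div_cancel' hpa).symm
  have hm0 : 0 < m := Nat.pos_of_ne_zero (by
    intro h0; rw [ham, h0, mul_zero] at ha; exact absurd ha (lt_irrefl 0))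
  have hmsf : Squarefree m := hsf.squarefree_of_dvd ⟨p, by rw [ham, mul_comm]⟩
  have hpm : ¬ p ∣ m := by
    intro h
    have h2 : p * p ∣ a := by rw [ham]; exact mul_dvd_mul_left p h
    exact hp.one_lt.ne' (Nat.isUnit_iff.mp (hsf p h2))
  have hpN : ¬ p ∣ N := by
    rw [hN, Np]
    intro h
    obtain ⟨q, hq, hpq⟩ := hp.prime.exists_mem_finset_dvd h
    simp only [Finset.mem_filter] at hq
    exact hq.2.2.2 ((Nat.prime_dvd_prime_iff_eq hp hq.2.1).mp hpq).symm
  have hmN : m ∣ N := by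
    rw [← Nat.prod_primeFactors_of_squarefree hmsf, hN, Np]
    apply Finset.prod_dvd_prod_of_subset
    intro q hq
    rw [Nat.mem_primeFactors] at hq
    obtain ⟨hqp, hqm, _⟩ := hq
    have hqa : q ∣ a := hqm.trans ⟨p, by rw [ham, mul_comm]⟩
    have hqx : (q : ℝ) < x := hfac q (Nat.mem_primeFactors.mpr ⟨hqp, hqa, ha.ne'⟩)
    have hqne : q ≠ p := by rintro rfl; exact hpm hqm
    simp only [Finset.mem_filter, Finset.mem_range]
    exact ⟨Nat.lt_ceil.mpr hqx, hqp, hqx, hqne⟩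
  set c := N / m with hc
  have hcN : N = m * c := (Nat.mul_div_cancel' hmN).symm
  have hpc : ¬ p ∣ c := fun h => hpN (h.trans ⟨m, by rw [hcN, mul_comm]⟩)
  -- key fract computation
  have key : ∀ k : ℕ, Int.fract (((k : ℝ) * N) / a) = ((k * c % p : ℕ) : ℝ) / p := by
    intro k
    have hmr : (m : ℝ) ≠ 0 := Nat.cast_ne_zero.mpr hm0.ne'
    have hpr : (p : ℝ) ≠ 0 := Nat.cast_ne_zero.mpr hp0.ne'
    have he : ((k : ℝ) * N) / a = ((k * c : ℕ) : ℝ) / p := by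
      rw [ham, hcN]; push_cast; field_simp
    rw [he, Int.fract_div_natCast_eq_div_natCast_mod]
  -- ZMod facts
  have hcu : (c : ZMod p) ≠ 0 := by
    rw [Ne, ZMod.natCast_eq_zero_iff]; exact hpc
  have hknd : ∀ k : ℕ, 1 ≤ k → k ≤ p - 1 → ¬ p ∣ k := by
    intro k h1 h2 hd
    have : p ≤ k := Nat.le_of_dvd h1 hd
    omega
  have hbound : ∀ k : ℕ, 1 ≤ k → k ≤ p - 1 →
      1 ≤ k * c % p ∧ k * c % p ≤ p - 1 := by
    intro k h1 h2
    have hlt : k * c % p < p := Nat.mod_lt _ hp0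
    have hne : k * c % p ≠ 0 := by
      rw [Ne, ← Nat.dvd_iff_mod_eq_zero]
      intro hd
      rcases (Nat.Prime.dvd_mul hp).mp hd with h | h
      · exact hknd k h1 h2 h
      · exact hpc h
    omega
  -- injectivity of k ↦ k*c % p on the range
  have hinj : ∀ k₁ k₂ : ℕ, 1 ≤ k₁ → k₁ ≤ p - 1 → 1 ≤ k₂ → k₂ ≤ p - 1 →
      k₁ * c % p = k₂ * c % p → k₁ = k₂ := by
    intro k₁ k₂ h₁ h₁' h₂ h₂' heq
    have hz : ((k₁ * c : ℕ) : ZMod p) = ((k₂ * c : ℕ) : ZMod p) :=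
      (ZMod.natCast_eq_natCast_iff _ _ _).mpr heq
    push_cast at hz
    have hk : (k₁ : ZMod p) = (k₂ : ZMod p) := mul_right_cancel₀ hcu hz
    have hlt₁ : k₁ < p := by omega
    have hlt₂ : k₂ < p := by omega
    have := congrArg ZMod.val hk
    rwa [ZMod.val_cast_of_lt hlt₁, ZMod.val_cast_of_lt hlt₂] at this
  -- real division by p is injective on naturals
  have hdivinj : ∀ i₁ i₂ : ℕ, (i₁ : ℝ) / p = (i₂ : ℝ) / p → i₁ = i₂ := by
    intro i₁ i₂ h
    have hpr : (p : ℝ) ≠ 0 := Nat.cast_ne_zero.mpr hp0.ne'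
    have h2 := congrArg (· * (p:ℝ)) h
    simp only [div_mul_cancel₀ _ hpr] at h2
    exact_mod_cast h2
  refine ⟨⟨?_, ?_, ?_⟩, ?_, ?_⟩
  · -- MapsTo
    intro k hk
    obtain ⟨h1, h2⟩ := hk
    exact ⟨k * c % p, (hbound k h1 h2).1, (hbound k h1 h2).2, key k⟩
  · -- InjOn
    intro k₁ hk₁ k₂ hk₂ heq
    simp only [key] at heq
    exact hinj k₁ k₂ hk₁.1 hk₁.2 hk₂.1 hk₂.2 (hdivinj _ _ heq)
  · -- SurjOn
    rintro t ⟨i, hi1, hi2, rfl⟩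
    have hiltp : i < p := by omega
    have hiz : (i : ZMod p) ≠ 0 := by
      rw [Ne, ZMod.natCast_eq_zero_iff]
      intro hd
      have := Nat.le_of_dvd hi1 hd
      omega
    set z : ZMod p := (i : ZMod p) * (c : ZMod p)⁻¹ with hz
    set k := z.val with hk
    have hkz : (k : ZMod p) = z := ZMod.natCast_rightInverse z
    have hkltp : k < p := ZMod.val_lt z
    have hkne : k ≠ 0 := by
      intro h0
      have : z = 0 := by rw [← hkz, h0, Nat.cast_zero]
      exact mul_ne_zero hiz (inv_ne_zero hcu) (hz ▸ this)
    have hfk : k * c % p = i := by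
      have h1 : ((k * c : ℕ) : ZMod p) = (i : ZMod p) := by
        push_cast
        rw [hkz, hz, mul_assoc, inv_mul_cancel₀ hcu, mul_one]
      have := congrArg ZMod.val h1
      rwa [ZMod.val_natCast, ZMod.val_cast_of_lt hiltp] at this
    refine ⟨k, ⟨by omega, by omega⟩, ?_⟩
    simp only [key k, hfk]
  · -- bullet 2
    intro k h1 h2
    exact ⟨k * c % p, (hbound k h1 h2).1, (hbound k h1 h2).2, key k⟩
  · -- bullet 3
    intro k₁ k₂ h₁ h₁' h₂ h₂' hne heq
    simp only [key] at heq
    exact hne (hinj k₁ k₂ h₁ h₁' h₂ h₂' (hdivinj _ _ heq))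

end
end
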